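/- arXiv:1302.5176 — 2 statements merged into one kernel-verified Lean document; each statement's English description precedes it below -/
import Mathlib

section
/- Let a ∈ [0,2] and b ∈ [−1,1]. Then every real root x of 9x³ − x = a(3x + b) satisfies x ≥ −1/3 if and only if either a = 0, or (b = 1 and a ≤ 2/3). Consequently, the smallest root F₁ attains its maximal value −1/3 exactly at quasimomenta (±π, θ₂) with θ₂ ∈ [−π,π] and (θ₁, 0) with θ₁ ∈ [−π,−θ₀] ∪ [θ₀,π], where θ₀ = arccos(−1/3). -/
/-!
Writing `p(x) = 9x³ - x - a(3x + b) = (3x + 1)(3x² - x - a) + a(1 - b)`, the value at `-1/3` is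
`a(1 - b) ≥ 0` and the quadratic factor exceeds `2/3` left of `-1/3`. So if `a(1 - b) = 0` and
`a ≤ 2/3` there is no root below `-1/3`; otherwise the intermediate value theorem on `[-2, -1/3]`,
applied to `p` when `b < 1` and to the quadratic factor when `b = 1`, produces one. The statement on
quasimomenta follows by reading `a = 0`, `b = 1` and `a ≤ 2/3` as conditions on `cos θ₁`, `cos θ₂`.
-/

open Real Set

lemma cubic_sub_eq_mul_add (a b x : ℝ) :
    9 * x ^ 3 - x - a * (3 * x + b) = (3 * x + 1) * (3 * x ^ 2 - x - a) + a * (1 - b) := by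
  ring

lemma neg_third_le_of_root {a b x : ℝ} (hab : a * (1 - b) = 0) (ha : a ≤ 2 / 3)
    (hx : 9 * x ^ 3 - x = a * (3 * x + b)) : -(1 / 3) ≤ x := by
  by_contra! hlt
  have hquad : 0 < 3 * x ^ 2 - x - a := by nlinarith
  have hlin : 3 * x + 1 < 0 := by linarith
  have := cubic_sub_eq_mul_add a b x
  nlinarith [mul_neg_of_neg_of_pos hlin hquad]

lemma exists_root_lt_neg_third_of_lt_one {a b : ℝ} (ha₀ : 0 < a) (ha₂ : a ≤ 2) (hb₁ : -1 ≤ b)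
    (hb : b < 1) : ∃ x, 9 * x ^ 3 - x = a * (3 * x + b) ∧ x < -(1 / 3) := by
  let p : ℝ → ℝ := fun x ↦ 9 * x ^ 3 - x - a * (3 * x + b)
  have hp : ContinuousOn p (Icc (-2) (-(1 / 3))) := by fun_prop
  have hleft : p (-2) < 0 := by simp only [p]; nlinarith
  have hright : 0 < p (-(1 / 3)) := by simp only [p]; nlinarith
  obtain ⟨x, hx, hpx⟩ := intermediate_value_Ioo (by norm_num) hp ⟨hleft, hright⟩
  exact ⟨x, by simp only [p] at hpx; linarith, hx.2⟩

lemma exists_root_lt_neg_third_of_eq_one {a : ℝ} (ha₀ : 2 / 3 < a) (ha₂ : a ≤ 2) :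
    ∃ x, 9 * x ^ 3 - x = a * (3 * x + 1) ∧ x < -(1 / 3) := by
  let q : ℝ → ℝ := fun x ↦ 3 * x ^ 2 - x - a
  have hq : ContinuousOn q (Icc (-2) (-(1 / 3))) := by fun_prop
  have hleft : 0 < q (-2) := by simp only [q]; linarith
  have hright : q (-(1 / 3)) < 0 := by simp only [q]; linarith
  obtain ⟨x, hx, hqx⟩ := intermediate_value_Ioo' (by norm_num) hq ⟨hright, hleft⟩
  refine ⟨x, ?_, hx.2⟩
  have := cubic_sub_eq_mul_add a 1 x
  simp only [q] at hqx
  rw [hqx] at this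
  linarith

theorem roots_ge_neg_third_iff (a b : ℝ) (ha : a ∈ Icc (0 : ℝ) 2) (hb : b ∈ Icc (-1 : ℝ) 1) :
    (∀ x : ℝ, 9 * x ^ 3 - x = a * (3 * x + b) → -(1 / 3) ≤ x) ↔ (a = 0 ∨ (b = 1 ∧ a ≤ 2 / 3)) := by
  constructor
  · intro h
    by_contra! hc
    obtain ⟨ha₀, hb₁⟩ := hc
    obtain ⟨x, hx, hlt⟩ : ∃ x, 9 * x ^ 3 - x = a * (3 * x + b) ∧ x < -(1 / 3) := by
      rcases hb.2.lt_or_eq with hb' | rfl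
      · exact exists_root_lt_neg_third_of_lt_one (ha.1.lt_of_ne' ha₀) ha.2 hb.1 hb'
      · exact exists_root_lt_neg_third_of_eq_one (hb₁ rfl) ha.2
    exact (h x hx).not_gt hlt
  · rintro (rfl | ⟨rfl, ha'⟩) x hx
    · exact neg_third_le_of_root (zero_mul _) (by norm_num) hx
    · exact neg_third_le_of_root (by ring) ha' hx

lemma cos_le_iff_arccos_le_abs {θ c : ℝ} (hθ : |θ| ≤ π) (hc : c ∈ Icc (-1 : ℝ) 1) :
    cos θ ≤ c ↔ arccos c ≤ |θ| := by
  have h := strictAntiOn_arccos.le_iff_ge hc ⟨neg_one_le_cos |θ|, cos_le_one |θ|⟩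
  rwa [arccos_cos (abs_nonneg θ) hθ, cos_abs, Iff.comm] at h

lemma cos_le_iff_mem_Icc_union {θ c : ℝ} (hθ : θ ∈ Icc (-π) π) (hc : c ∈ Icc (-1 : ℝ) 1) :
    cos θ ≤ c ↔ θ ∈ Icc (-π) (-arccos c) ∪ Icc (arccos c) π := by
  rw [cos_le_iff_arccos_le_abs (abs_le.2 hθ) hc, le_abs']
  simp only [mem_union, mem_Icc, hθ.1, hθ.2, true_and, and_true]

lemma cos_add_one_eq_zero_iff {θ : ℝ} (hθ : θ ∈ Icc (-π) π) :
    cos θ + 1 = 0 ↔ θ = π ∨ θ = -π := by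
  have hθ' : |θ| ≤ π := abs_le.2 hθ
  have h := cos_le_iff_arccos_le_abs hθ' (c := -1) (by norm_num)
  rw [arccos_neg_one] at h
  rw [← abs_eq pi_pos.le, ← hθ'.ge_iff_eq, ← h]
  constructor <;> intro <;> linarith [neg_one_le_cos θ]

/-- Every real root of 9x³ − x = a(3x+b) is ≥ −1/3 iff a = 0 or (b = 1 and a ≤ 2/3);
consequently the smallest root F₁ attains its maximum −1/3 exactly at quasimomenta
(±π,θ₂), θ₂ ∈ [−π,π], and (θ₁,0), θ₁ ∈ [−π,−θ₀] ∪ [θ₀,π], where θ₀ = arccos(−1/3). -/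
theorem graphyne_F1_max :
    (∀ a b : ℝ, a ∈ Set.Icc (0 : ℝ) 2 → b ∈ Set.Icc (-1 : ℝ) 1 →
      ((∀ x : ℝ, 9 * x ^ 3 - x = a * (3 * x + b) → -(1/3) ≤ x) ↔
        (a = 0 ∨ (b = 1 ∧ a ≤ 2/3)))) ∧
    (∀ θ₁ θ₂ : ℝ, θ₁ ∈ Set.Icc (-π) π → θ₂ ∈ Set.Icc (-π) π →
      ((∀ x : ℝ, 9 * x ^ 3 - x = (Real.cos θ₁ + 1) * (3 * x + Real.cos θ₂) → -(1/3) ≤ x) ↔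
        ((θ₁ = π ∨ θ₁ = -π) ∨
          (θ₂ = 0 ∧
            θ₁ ∈ Set.Icc (-π) (-(Real.arccos (-(1/3)))) ∪ Set.Icc (Real.arccos (-(1/3))) π)))) := by
  refine ⟨roots_ge_neg_third_iff, fun θ₁ θ₂ h₁ h₂ ↦ ?_⟩
  have ha : cos θ₁ + 1 ∈ Icc (0 : ℝ) 2 :=
    ⟨by linarith [neg_one_le_cos θ₁], by linarith [cos_le_one θ₁]⟩
  have hcos₁ : cos θ₁ + 1 ≤ 2 / 3 ↔ cos θ₁ ≤ -(1 / 3) := by constructor <;> intro <;> linarith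
  rw [roots_ge_neg_third_iff _ _ ha ⟨neg_one_le_cos θ₂, cos_le_one θ₂⟩,
    cos_add_one_eq_zero_iff h₁, hcos₁, cos_le_iff_mem_Icc_union h₁ (by norm_num),
    cos_eq_one_iff_of_lt_of_lt (by linarith [h₂.1, pi_pos]) (by linarith [h₂.2, pi_pos])]
end

section
/- Let k ∈ ℕ, λ₀ = ((2k+1)π)², and define f : ℝ³ → ℝ by f(θ₁,θ₂,λ) = 9cos³(√λ) − cos(√λ) − (cos θ₁ + 1)(3cos(√λ) + cos θ₂), where √λ denotes Real.sqrt λ. Then at the point P = (0, π, λ₀): f(P) = 0; all three first partial derivatives of f vanish at P; and the second partial derivatives at P are ∂²f/∂θ₁² = −4, ∂²f/∂θ₂² = −2, ∂²f/∂λ² = 5/λ₀, with all mixed second partials equal to 0. Hence the Hessian of f at P is the indefinite nondegenerate matrix diag(−4, −2, 5/λ₀), so the zero set of f has a conical (Dirac) singularity at P. -/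
/-!
Writing `c = cos √λ`, the function is a polynomial in `cos θ₁`, `cos θ₂` and `c`. At
`λ₀ = ((2k+1)π)²` we have `c = -1` and `sin √λ₀ = 0`, so `λ ↦ c` is critical at `λ₀` and the
second `λ`-derivative of `f(0, π, ·) = 9c³ - 7c + 2` reduces to `(27c² - 7) c'' = 20 c''`.
Since `c'' = (sin √λ / √λ - cos √λ) / (4λ)`, this is `20 / (4λ₀) = 5 / λ₀`. -/

open Real

/-- The free dispersion function of the graphyne quantum graph,
f(θ₁,θ₂,λ) = 9cos³(√λ) − cos(√λ) − (cos θ₁ + 1)(3cos(√λ) + cos θ₂). -/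
noncomputable def graphyneDispersion (θ₁ θ₂ l : ℝ) : ℝ :=
  9 * (Real.cos (Real.sqrt l)) ^ 3 - Real.cos (Real.sqrt l) -
    (Real.cos θ₁ + 1) * (3 * Real.cos (Real.sqrt l) + Real.cos θ₂)

lemma sqrt_odd_mul_pi_sq (k : ℕ) : √(((2 * k + 1) * π) ^ 2) = (2 * k + 1) * π :=
  sqrt_sq (by positivity)

lemma sin_odd_mul_pi (k : ℕ) : sin ((2 * k + 1) * π) = 0 := by
  exact_mod_cast sin_nat_mul_pi (2 * k + 1)

lemma cos_odd_mul_pi (k : ℕ) : cos ((2 * k + 1) * π) = -1 := by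
  rw [← cos_nat_mul_two_pi_add_pi k]
  ring_nf

lemma hasDerivAt_cos_sqrt {l : ℝ} (hl : l ≠ 0) :
    HasDerivAt (fun l => cos √l) (-sin √l / (2 * √l)) l := by
  simpa [div_eq_mul_inv] using (hasDerivAt_sqrt hl).cos

lemma hasDerivAt_neg_sin_sqrt_div {l : ℝ} (hl : 0 < l) :
    HasDerivAt (fun l => -sin √l / (2 * √l)) ((sin √l / √l - cos √l) / (4 * l)) l := by
  have hsqrt := hasDerivAt_sqrt hl.ne'
  have hden : 2 * √l ≠ 0 := by positivity
  refine ((hsqrt.sin.neg).div (hsqrt.const_mul 2) hden).congr_deriv ?_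
  have hs : √l ≠ 0 := (sqrt_pos.2 hl).ne'
  simp only [Pi.neg_apply]
  field_simp
  rw [sq_sqrt hl.le]
  ring

section PartialDerivatives

variable (θ₁ θ₂ : ℝ)

lemma hasDerivAt_graphyneDispersion_fst (l : ℝ) :
    HasDerivAt (fun x => graphyneDispersion x θ₂ l) (sin θ₁ * (3 * cos √l + cos θ₂)) θ₁ := by
  refine (((hasDerivAt_cos θ₁).add_const 1).mul_const (3 * cos √l + cos θ₂) |>.const_sub
    (9 * cos √l ^ 3 - cos √l)).congr_deriv ?_
  ring

lemma hasDerivAt_graphyneDispersion_snd (l : ℝ) :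
    HasDerivAt (fun y => graphyneDispersion θ₁ y l) ((cos θ₁ + 1) * sin θ₂) θ₂ := by
  refine (((hasDerivAt_cos θ₂).const_add (3 * cos √l)).const_mul (cos θ₁ + 1) |>.const_sub
    (9 * cos √l ^ 3 - cos √l)).congr_deriv ?_
  ring

lemma hasDerivAt_graphyneDispersion_thd {l : ℝ} (hl : l ≠ 0) :
    HasDerivAt (fun l => graphyneDispersion θ₁ θ₂ l)
      ((27 * cos √l ^ 2 - 3 * cos θ₁ - 4) * (-sin √l / (2 * √l))) l := by
  have hc := hasDerivAt_cos_sqrt hl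
  refine ((((hc.pow 3).const_mul 9).sub hc).sub
    (((hc.const_mul 3).add_const (cos θ₂)).const_mul (cos θ₁ + 1))).congr_deriv ?_
  ring

lemma deriv_graphyneDispersion_fst_zero (l : ℝ) :
    deriv (fun x => graphyneDispersion x θ₂ l) 0 = 0 := by
  simp [(hasDerivAt_graphyneDispersion_fst 0 θ₂ l).deriv]

lemma deriv_graphyneDispersion_snd_pi (l : ℝ) :
    deriv (fun y => graphyneDispersion θ₁ y l) π = 0 := by
  simp [(hasDerivAt_graphyneDispersion_snd θ₁ π l).deriv]

lemma hasDerivAt_deriv_graphyneDispersion_fst (l : ℝ) :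
    HasDerivAt (deriv fun x => graphyneDispersion x θ₂ l)
      (cos θ₁ * (3 * cos √l + cos θ₂)) θ₁ := by
  have h : deriv (fun x => graphyneDispersion x θ₂ l) = fun x => sin x * (3 * cos √l + cos θ₂) :=
    funext fun x => (hasDerivAt_graphyneDispersion_fst x θ₂ l).deriv
  rw [h]
  exact (hasDerivAt_sin θ₁).mul_const _

lemma hasDerivAt_deriv_graphyneDispersion_snd (l : ℝ) :
    HasDerivAt (deriv fun y => graphyneDispersion θ₁ y l) ((cos θ₁ + 1) * cos θ₂) θ₂ := by
  have h : deriv (fun y => graphyneDispersion θ₁ y l) = fun y => (cos θ₁ + 1) * sin y :=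
    funext fun y => (hasDerivAt_graphyneDispersion_snd θ₁ y l).deriv
  rw [h]
  exact (hasDerivAt_sin θ₂).const_mul _

lemma hasDerivAt_deriv_graphyneDispersion_thd {l : ℝ} (hl : 0 < l) (hsin : sin √l = 0) :
    HasDerivAt (deriv fun l => graphyneDispersion θ₁ θ₂ l)
      ((27 * cos √l ^ 2 - 3 * cos θ₁ - 4) * (-cos √l / (4 * l))) l := by
  have h : deriv (fun l => graphyneDispersion θ₁ θ₂ l) =ᶠ[nhds l]
      fun l => (27 * cos √l ^ 2 - 3 * cos θ₁ - 4) * (-sin √l / (2 * √l)) := by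
    filter_upwards [eventually_gt_nhds hl] with m hm
    exact (hasDerivAt_graphyneDispersion_thd θ₁ θ₂ hm.ne').deriv
  refine HasDerivAt.congr_of_eventuallyEq ?_ h
  have hc := hasDerivAt_cos_sqrt hl.ne'
  refine ((((hc.pow 2).const_mul 27).sub_const _ |>.sub_const _).mul
    (hasDerivAt_neg_sin_sqrt_div hl)).congr_deriv ?_
  simp only [Pi.pow_apply, hsin]
  ring

end PartialDerivatives

/-- At P = (0,π,((2k+1)π)²) the free dispersion function vanishes together with its
gradient, and its Hessian is the indefinite nondegenerate matrix diag(−4, −2, 5/lam0):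
a conical (Dirac) singularity of the Bloch variety. -/
theorem graphyne_dirac_point_D_eq_neg_two (k : ℕ) (lam0 : ℝ)
    (hlam0 : lam0 = ((2 * (k : ℝ) + 1) * π) ^ 2) :
    graphyneDispersion 0 π lam0 = 0 ∧
    deriv (fun x => graphyneDispersion x π lam0) 0 = 0 ∧
    deriv (fun y => graphyneDispersion 0 y lam0) π = 0 ∧
    deriv (fun l => graphyneDispersion 0 π l) lam0 = 0 ∧
    deriv (deriv (fun x => graphyneDispersion x π lam0)) 0 = -4 ∧
    deriv (deriv (fun y => graphyneDispersion 0 y lam0)) π = -2 ∧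
    deriv (deriv (fun l => graphyneDispersion 0 π l)) lam0 = 5 / lam0 ∧
    deriv (fun y => deriv (fun x => graphyneDispersion x y lam0) 0) π = 0 ∧
    deriv (fun l => deriv (fun x => graphyneDispersion x π l) 0) lam0 = 0 ∧
    deriv (fun l => deriv (fun y => graphyneDispersion 0 y l) π) lam0 = 0 ∧
    Matrix.det (Matrix.diagonal ![(-4 : ℝ), -2, 5 / lam0]) ≠ 0 ∧
    0 < 5 / lam0 := by
  have hpos : 0 < lam0 := by rw [hlam0]; positivity
  have hsin : sin √lam0 = 0 := by rw [hlam0, sqrt_odd_mul_pi_sq, sin_odd_mul_pi]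
  have hcos : cos √lam0 = -1 := by rw [hlam0, sqrt_odd_mul_pi_sq, cos_odd_mul_pi]
  refine ⟨?_, deriv_graphyneDispersion_fst_zero _ _, deriv_graphyneDispersion_snd_pi _ _,
    ?_, ?_, ?_, ?_, ?_, ?_, ?_, ?_, by positivity⟩
  · simp only [graphyneDispersion, hcos, cos_zero, cos_pi]
    norm_num
  · simp [(hasDerivAt_graphyneDispersion_thd 0 π hpos.ne').deriv, hsin]
  · simp only [(hasDerivAt_deriv_graphyneDispersion_fst 0 π lam0).deriv, hcos, cos_zero, cos_pi]
    norm_num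
  · simp only [(hasDerivAt_deriv_graphyneDispersion_snd 0 π lam0).deriv, cos_zero, cos_pi]
    norm_num
  · rw [(hasDerivAt_deriv_graphyneDispersion_thd 0 π hpos hsin).deriv, hcos, cos_zero]
    field_simp
    norm_num
  · simp only [deriv_graphyneDispersion_fst_zero, deriv_const]
  · simp only [deriv_graphyneDispersion_fst_zero, deriv_const]
  · simp only [deriv_graphyneDispersion_snd_pi, deriv_const]
  · simp [Matrix.det_diagonal, Fin.prod_univ_three, hpos.ne']
end
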